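/- arXiv:2402.10068 — 4 statements merged into one kernel-verified Lean document; each statement's English description precedes it below -/
import Mathlib

section
/- Let h be a holomorphic function on ℂ∖{0} such that the integral over ℂ∖{0} of |h(η)|² / (|η|²(|η|² + 1/|η|²)) with respect to Lebesgue measure is finite. Then h is constant. -/
/-!
Put `w(η) = 1 + |η|⁴`, which is `|η|² (|η|² + |η|⁻²)` off the origin. By the sub-mean-value
property of `|h|²` on the disc `B_z` of radius `|z|/2` about `z`, and since `w ≤ 1 + 6|z|⁴` there,
`|z|² |h z|² ≲ (1 + 6|z|⁴) ∫_{B_z} |h|² / w`. The finite measure `|h|² / w dη` of `B_z` tends to `0`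
both as `z → 0` (the area of `B_z` does) and as `z → ∞` (tightness). Hence `z h(z) → 0` at the
origin, so the singularity is removable, and `h(z) / z → 0` at infinity, so the extension is
constant by Cauchy's estimate for `h'`.
-/

open MeasureTheory Metric Set Filter
open scoped Real ENNReal Topology

section MeanValue

variable {E : Type*} [NormedAddCommGroup E] [NormedSpace ℂ E] [CompleteSpace E]

theorem DiffContOnCl.setIntegral_circleMap_eq_two_pi_smul {f : ℂ → E} {c : ℂ} {R : ℝ}
    (hf : DiffContOnCl ℂ f (ball c |R|)) :
    ∫ θ in Ioo (-π) π, f (circleMap c R θ) = (2 * π) • f c := by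
  have h := hf.circleAverage
  rw [Real.circleAverage_eq_integral_add (-π),
    intervalIntegral.integral_comp_add_right (fun θ ↦ f (circleMap c R θ)),
    intervalIntegral.integral_of_le (by linarith [Real.pi_pos]),
    integral_Ioc_eq_integral_Ioo] at h
  rw [← h, smul_smul, mul_inv_cancel₀ Real.two_pi_pos.ne', one_smul]
  ring_nf

theorem DiffContOnCl.two_pi_mul_enorm_le_lintegral_circleMap {f : ℂ → E} {c : ℂ} {R : ℝ}
    (hf : DiffContOnCl ℂ f (ball c |R|)) :
    ENNReal.ofReal (2 * π) * ‖f c‖ₑ ≤ ∫⁻ θ in Ioo (-π) π, ‖f (circleMap c R θ)‖ₑ :=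
  calc ENNReal.ofReal (2 * π) * ‖f c‖ₑ = ‖(2 * π) • f c‖ₑ := by
        rw [enorm_smul, Real.enorm_of_nonneg Real.two_pi_pos.le]
    _ = ‖∫ θ in Ioo (-π) π, f (circleMap c R θ)‖ₑ := by
        rw [hf.setIntegral_circleMap_eq_two_pi_smul]
    _ ≤ ∫⁻ θ in Ioo (-π) π, ‖f (circleMap c R θ)‖ₑ := enorm_integral_le_lintegral_enorm _

theorem lintegral_eq_lintegral_circleMap {G : ℂ → ℝ≥0∞} (hG : Measurable G) (c : ℂ) :
    ∫⁻ z, G z = ∫⁻ r in Ioi 0, ENNReal.ofReal r * ∫⁻ θ in Ioo (-π) π, G (circleMap c r θ) := by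
  have hcirc : ∀ p : ℝ × ℝ, c + Complex.polarCoord.symm p = circleMap c p.1 p.2 := fun p => by
    simp [circleMap, Complex.polarCoord_symm_apply, Complex.exp_mul_I]
  have hGc : Measurable fun p : ℝ × ℝ => G (circleMap c p.1 p.2) :=
    hG.comp (Real.circleMap.continuous (c := c)).measurable
  rw [← lintegral_add_left_eq_self (μ := volume) G c, ← Complex.lintegral_comp_polarCoord_symm,
    polarCoord_target, Measure.volume_eq_prod, ← Measure.prod_restrict]
  simp only [hcirc, smul_eq_mul]
  rw [lintegral_prod (fun p : ℝ × ℝ => ENNReal.ofReal p.1 * G (circleMap c p.1 p.2))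
    (measurable_fst.ennreal_ofReal.mul hGc).aemeasurable]
  refine lintegral_congr fun r => ?_
  dsimp only
  exact lintegral_const_mul (f := fun θ => G (circleMap c r θ)) _
    (hG.comp (continuous_circleMap c r).measurable)

theorem DifferentiableOn.volume_closedBall_mul_enorm_le {f : ℂ → E} {c : ℂ} {R : ℝ}
    (hf : DifferentiableOn ℂ f (closedBall c R)) :
    volume (closedBall c R) * ‖f c‖ₑ ≤ ∫⁻ z in closedBall c R, ‖f z‖ₑ := by
  classical
  set B := closedBall c R
  have hB : MeasurableSet B := measurableSet_closedBall
  have hG : Measurable (B.indicator fun z => ‖f z‖ₑ) := by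
    rw [← piecewise_eq_indicator]
    exact hf.continuousOn.enorm.measurable_piecewise continuousOn_const hB
  have hcircle : ∀ r θ, circleMap c r θ ∈ B ↔ |r| ≤ R := fun r θ => by
    rw [mem_closedBall, dist_eq_norm, circleMap_sub_center, norm_circleMap_zero]
  -- write both sides in polar coordinates about `c` and compare them circle by circle
  rw [mul_comm, ← lintegral_indicator_const hB, ← lintegral_indicator hB,
    lintegral_eq_lintegral_circleMap (measurable_const.indicator hB) c,
    lintegral_eq_lintegral_circleMap hG c]
  refine lintegral_mono fun r => mul_le_mul_right ?_ _
  by_cases hr : |r| ≤ R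
  · simp only [indicator_of_mem ((hcircle r _).2 hr), setLIntegral_const, Real.volume_Ioo]
    rw [sub_neg_eq_add, ← two_mul, mul_comm]
    exact DiffContOnCl.two_pi_mul_enorm_le_lintegral_circleMap
      (hf.diffContOnCl_ball (closedBall_subset_closedBall hr))
  · simp [indicator_of_notMem (mt (hcircle r _).1 hr)]

end MeanValue

theorem DifferentiableOn.volume_closedBall_mul_enorm_sq_le {f : ℂ → ℂ} {c : ℂ} {R K : ℝ}
    {ρ : ℂ → ℝ≥0∞} (hf : DifferentiableOn ℂ f (closedBall c R))
    (hρ : ∀ η ∈ closedBall c R, 1 ≤ ENNReal.ofReal K * ρ η) :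
    volume (closedBall c R) * ‖f c‖ₑ ^ 2 ≤
      ENNReal.ofReal K * ∫⁻ η in closedBall c R, ‖f η‖ₑ ^ 2 * ρ η :=
  calc volume (closedBall c R) * ‖f c‖ₑ ^ 2 ≤ ∫⁻ η in closedBall c R, ‖f η‖ₑ ^ 2 := by
        simpa only [Pi.pow_apply, enorm_pow] using (hf.pow 2).volume_closedBall_mul_enorm_le
    _ ≤ ∫⁻ η in closedBall c R, ENNReal.ofReal K * (‖f η‖ₑ ^ 2 * ρ η) := by
        refine setLIntegral_mono' measurableSet_closedBall fun η hη => ?_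
        calc ‖f η‖ₑ ^ 2 = 1 * ‖f η‖ₑ ^ 2 := (one_mul _).symm
          _ ≤ ENNReal.ofReal K * ρ η * ‖f η‖ₑ ^ 2 := mul_le_mul_left (hρ η hη) _
          _ = _ := by ring
    _ = _ := lintegral_const_mul' _ _ ENNReal.ofReal_ne_top

theorem Differentiable.exists_const_forall_eq_of_isLittleO {E : Type*} [NormedAddCommGroup E]
    [NormedSpace ℂ E] {f : ℂ → E} (hf : Differentiable ℂ f)
    (ho : f =o[cocompact ℂ] fun z => z) : ∃ a, ∀ z, f z = a := by
  refine ⟨f 0, fun z => is_const_of_deriv_eq_zero hf (fun c => ?_) z 0⟩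
  refine norm_le_zero_iff.1 (le_of_forall_pos_le_add fun ε hε => ?_)
  obtain ⟨K, hK, hKf⟩ := mem_cocompact.1 (ho.def (half_pos hε))
  obtain ⟨r, hr⟩ := hK.isBounded.subset_closedBall c
  set R := max r ‖c‖ + 1
  have hR : 0 < R := by positivity
  have hsphere : ∀ w ∈ sphere c R, ‖f w‖ ≤ ε * R := by
    intro w hw
    rw [mem_sphere, dist_eq_norm] at hw
    have hwK : w ∉ K := fun h => by
      have := hr h
      rw [mem_closedBall, dist_eq_norm, hw] at this
      linarith [le_max_left r ‖c‖]
    have hw' : ‖w‖ ≤ ‖c‖ + R := by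
      have := norm_le_norm_add_norm_sub' w c
      linarith
    calc ‖f w‖ ≤ ε / 2 * ‖w‖ := hKf hwK
      _ ≤ ε / 2 * (2 * R) := by gcongr; linarith [le_max_right r ‖c‖]
      _ = ε * R := by ring
  calc _ ≤ ε * R / R :=
        Complex.norm_deriv_le_of_forall_mem_sphere_norm_le hR hf.diffContOnCl hsphere
    _ = 0 + ε := by field_simp; ring

theorem Complex.exists_differentiable_eq_of_tendsto_mul_nhdsNE_zero {f : ℂ → ℂ}
    (hf : DifferentiableOn ℂ f {0}ᶜ) (hlim : Tendsto (fun z => z * f z) (𝓝[≠] 0) (𝓝 0)) :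
    ∃ F : ℂ → ℂ, Differentiable ℂ F ∧ ∀ z, z ≠ 0 → F z = f z := by
  have ho : (fun z => f z - f 0) =o[𝓝[≠] 0] fun z => (z - 0)⁻¹ := by
    rw [Asymptotics.isLittleO_iff_tendsto' (Eventually.of_forall fun z hz => by simp_all)]
    have hz : Tendsto (fun z : ℂ => z * f 0) (𝓝[≠] 0) (𝓝 0) := by
      simpa using ((continuous_mul_const (f 0)).tendsto 0).mono_left nhdsWithin_le_nhds
    refine (sub_zero (0 : ℂ) ▸ hlim.sub hz).congr fun z => ?_
    rw [sub_zero, div_inv_eq_mul]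
    ring
  have hF := differentiableOn_update_limUnder_insert_of_isLittleO self_mem_nhdsWithin hf ho
  rw [insert_eq, union_compl_self, differentiableOn_univ] at hF
  exact ⟨_, hF, fun z hz => Function.update_of_ne hz _ _⟩

theorem tendsto_volume_closedBall_norm_div_two :
    Tendsto (fun z : ℂ => volume (closedBall z (‖z‖ / 2))) (𝓝 0) (𝓝 0) := by
  have hr : Tendsto (fun z : ℂ => ENNReal.ofReal (‖z‖ / 2)) (𝓝 0) (𝓝 0) := by
    simpa [Function.comp_def] using
      (ENNReal.continuous_ofReal.comp (continuous_norm.div_const 2)).tendsto (0 : ℂ)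
  simpa using ENNReal.Tendsto.mul_const (ENNReal.Tendsto.pow (n := 2) hr)
    (Or.inr (ENNReal.coe_ne_top (r := NNReal.pi)))

theorem tendsto_measure_closedBall_norm_div_two_cocompact {E : Type*} [NormedAddCommGroup E]
    [ProperSpace E] [MeasurableSpace E] [BorelSpace E] (ν : Measure E) [IsFiniteMeasure ν] :
    Tendsto (fun z => ν (closedBall z (‖z‖ / 2))) (cocompact E) (𝓝 0) := by
  have htight : Tendsto ν (cocompact E).smallSets (𝓝 0) := by
    simpa [IsTightMeasureSet] using isTightMeasureSet_singleton (μ := ν)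
  refine htight.comp (tendsto_smallSets_iff.2 fun t ht => ?_)
  rw [← cobounded_eq_cocompact, ← comap_norm_atTop, mem_comap] at ht
  obtain ⟨s, hs, hst⟩ := ht
  obtain ⟨R, hR⟩ := mem_atTop_sets.1 hs
  filter_upwards [tendsto_norm_cocompact_atTop.eventually_ge_atTop (2 * R)] with z hz w hw
  refine hst (hR _ ?_)
  have := norm_le_norm_add_norm_sub' z w
  rw [mem_closedBall, dist_eq_norm, norm_sub_rev] at hw
  linarith

theorem tendsto_zero_of_sq_norm_le {α F : Type*} [SeminormedAddGroup F] {l : Filter α}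
    {u : α → F} {v : α → ℝ} (hv : Tendsto v l (𝓝 0)) (huv : ∀ᶠ x in l, ‖u x‖ ^ 2 ≤ v x) :
    Tendsto u l (𝓝 0) :=
  squeeze_zero_norm' (huv.mono fun x hx => (abs_norm (u x)).symm.le.trans (Real.abs_le_sqrt hx))
    (by simpa using hv.sqrt)

noncomputable def weightedEnergy (f : ℂ → ℂ) : Measure ℂ :=
  volume.withDensity fun η => ‖f η‖ₑ ^ 2 * ENNReal.ofReal (1 + ‖η‖ ^ 4)⁻¹

theorem weightedEnergy_apply (f : ℂ → ℂ) (s : Set ℂ) :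
    weightedEnergy f s = ∫⁻ η in s, ‖f η‖ₑ ^ 2 * ENNReal.ofReal (1 + ‖η‖ ^ 4)⁻¹ :=
  withDensity_apply' _ s

theorem weightedEnergy_congr_ae {f g : ℂ → ℂ} (hfg : f =ᵐ[volume] g) :
    weightedEnergy f = weightedEnergy g :=
  withDensity_congr_ae (hfg.mono fun z hz => by simp only [hz])

theorem weightedEnergy_univ (f : ℂ → ℂ) :
    weightedEnergy f univ = ∫⁻ η in ({0}ᶜ : Set ℂ),
      ENNReal.ofReal (‖f η‖ ^ 2 / (‖η‖ ^ 2 * (‖η‖ ^ 2 + (‖η‖ ^ 2)⁻¹))) := by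
  rw [weightedEnergy_apply, Measure.restrict_univ]
  conv_lhs => rw [← restrict_compl_singleton (μ := volume) (0 : ℂ)]
  refine setLIntegral_congr_fun (measurableSet_singleton (0 : ℂ)).compl fun η hη => ?_
  have hη : ‖η‖ ^ 2 * (‖η‖ ^ 2 + (‖η‖ ^ 2)⁻¹) = 1 + ‖η‖ ^ 4 := by
    field_simp [norm_ne_zero_iff.2 hη]
    ring
  rw [hη, div_eq_mul_inv, ENNReal.ofReal_mul (by positivity), ENNReal.ofReal_pow (norm_nonneg _),
    ofReal_norm]

theorem sq_norm_mul_sq_norm_le_weightedEnergy {f : ℂ → ℂ} {z : ℂ}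
    (hf : DifferentiableOn ℂ f (closedBall z (‖z‖ / 2)))
    (hfin : weightedEnergy f (closedBall z (‖z‖ / 2)) ≠ ⊤) :
    ‖z‖ ^ 2 * ‖f z‖ ^ 2 ≤
      4 / π * (1 + 6 * ‖z‖ ^ 4) * (weightedEnergy f (closedBall z (‖z‖ / 2))).toReal := by
  have hρ : ∀ η ∈ closedBall z (‖z‖ / 2),
      1 ≤ ENNReal.ofReal (1 + 6 * ‖z‖ ^ 4) * ENNReal.ofReal (1 + ‖η‖ ^ 4)⁻¹ := by
    intro η hη
    have hη' : ‖η‖ ≤ 3 / 2 * ‖z‖ := by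
      have := norm_le_norm_add_norm_sub' η z
      rw [mem_closedBall, dist_eq_norm] at hη
      linarith
    rw [← ENNReal.ofReal_mul (by positivity), ENNReal.one_le_ofReal, ← div_eq_mul_inv,
      one_le_div (by positivity)]
    have : ‖η‖ ^ 4 ≤ (3 / 2 * ‖z‖) ^ 4 := by gcongr
    nlinarith [pow_nonneg (norm_nonneg z) 4]
  rw [weightedEnergy_apply] at hfin ⊢
  have key := ENNReal.toReal_mono (ENNReal.mul_ne_top ENNReal.ofReal_ne_top hfin)
    (hf.volume_closedBall_mul_enorm_sq_le hρ)
  rw [Complex.volume_closedBall, ENNReal.toReal_mul, ENNReal.toReal_mul, ENNReal.toReal_mul,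
    ENNReal.toReal_pow, ENNReal.toReal_pow, ENNReal.toReal_ofReal (by positivity),
    ENNReal.toReal_ofReal (by positivity), toReal_enorm, ENNReal.coe_toReal,
    NNReal.coe_real_pi] at key
  calc ‖z‖ ^ 2 * ‖f z‖ ^ 2 = 4 / π * ((‖z‖ / 2) ^ 2 * π * ‖f z‖ ^ 2) := by
        field_simp
        ring
    _ ≤ _ := by
        rw [mul_assoc (4 / π)]
        gcongr

theorem sq_norm_mul_le_weightedEnergy {f : ℂ → ℂ} {z : ℂ} (hz : ‖z‖ ≤ 1)
    (hf : DifferentiableOn ℂ f (closedBall z (‖z‖ / 2)))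
    (hfin : weightedEnergy f (closedBall z (‖z‖ / 2)) ≠ ⊤) :
    ‖z * f z‖ ^ 2 ≤ 28 / π * (weightedEnergy f (closedBall z (‖z‖ / 2))).toReal := by
  have hz4 : ‖z‖ ^ 4 ≤ 1 := pow_le_one₀ (norm_nonneg z) hz
  calc ‖z * f z‖ ^ 2 ≤ 4 / π * (1 + 6 * ‖z‖ ^ 4) * (weightedEnergy f _).toReal := by
        rw [norm_mul, mul_pow]
        exact sq_norm_mul_sq_norm_le_weightedEnergy hf hfin
    _ ≤ 4 / π * 7 * (weightedEnergy f _).toReal := by gcongr; linarith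
    _ = _ := by ring

theorem sq_norm_div_le_weightedEnergy {f : ℂ → ℂ} {z : ℂ} (hz : 1 ≤ ‖z‖)
    (hf : DifferentiableOn ℂ f (closedBall z (‖z‖ / 2)))
    (hfin : weightedEnergy f (closedBall z (‖z‖ / 2)) ≠ ⊤) :
    ‖f z / z‖ ^ 2 ≤ 28 / π * (weightedEnergy f (closedBall z (‖z‖ / 2))).toReal := by
  have hz2 : 0 < ‖z‖ ^ 2 := by positivity
  have hz4 : 1 ≤ ‖z‖ ^ 4 := one_le_pow₀ hz
  refine le_of_mul_le_mul_left ?_ (pow_pos hz2 2)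
  calc (‖z‖ ^ 2) ^ 2 * ‖f z / z‖ ^ 2 = ‖z‖ ^ 2 * ‖f z‖ ^ 2 := by
        rw [norm_div]
        field_simp
    _ ≤ 4 / π * (1 + 6 * ‖z‖ ^ 4) * (weightedEnergy f _).toReal :=
        sq_norm_mul_sq_norm_le_weightedEnergy hf hfin
    _ ≤ 4 / π * (7 * ‖z‖ ^ 4) * (weightedEnergy f _).toReal := by gcongr; linarith
    _ = _ := by ring

theorem closedBall_norm_div_two_subset_compl_zero {z : ℂ} (hz : z ≠ 0) :
    closedBall z (‖z‖ / 2) ⊆ {0}ᶜ := by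
  intro w hw hw0
  rw [mem_singleton_iff.1 hw0, mem_closedBall, dist_comm, dist_zero_right] at hw
  linarith [norm_pos_iff.2 hz]

theorem tendsto_mul_nhdsNE_zero_of_weightedEnergy {f : ℂ → ℂ} (hf : DifferentiableOn ℂ f {0}ᶜ)
    [IsFiniteMeasure (weightedEnergy f)] :
    Tendsto (fun z => z * f z) (𝓝[≠] 0) (𝓝 0) := by
  have hfin : ∫⁻ η, ‖f η‖ₑ ^ 2 * ENNReal.ofReal (1 + ‖η‖ ^ 4)⁻¹ ≠ ⊤ := by
    simpa [weightedEnergy_apply] using measure_ne_top (weightedEnergy f) univ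
  have hE := (ENNReal.tendsto_toReal ENNReal.zero_ne_top).comp (tendsto_setLIntegral_zero hfin
    (tendsto_volume_closedBall_norm_div_two.mono_left (nhdsWithin_le_nhds (s := {0}ᶜ))))
  simp only [Function.comp_def, ← weightedEnergy_apply] at hE
  refine tendsto_zero_of_sq_norm_le (by simpa using hE.const_mul (28 / π)) ?_
  filter_upwards [self_mem_nhdsWithin,
    nhdsWithin_le_nhds (closedBall_mem_nhds (0 : ℂ) one_pos)] with z hz0 hz1
  rw [mem_closedBall, dist_zero_right] at hz1
  exact sq_norm_mul_le_weightedEnergy hz1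
    (hf.mono (closedBall_norm_div_two_subset_compl_zero hz0)) (measure_ne_top _ _)

theorem isLittleO_cocompact_of_weightedEnergy {f : ℂ → ℂ} (hf : Differentiable ℂ f)
    [IsFiniteMeasure (weightedEnergy f)] :
    f =o[cocompact ℂ] fun z => z := by
  have hfar := (tendsto_norm_cocompact_atTop (E := ℂ)).eventually_ge_atTop 1
  rw [Asymptotics.isLittleO_iff_tendsto'
    (hfar.mono fun z hz hz0 => by simp [hz0] at hz; linarith)]
  have hE := (ENNReal.tendsto_toReal ENNReal.zero_ne_top).comp
    (tendsto_measure_closedBall_norm_div_two_cocompact (weightedEnergy f))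
  refine tendsto_zero_of_sq_norm_le (by simpa using hE.const_mul (28 / π)) ?_
  filter_upwards [hfar] with z hz
  exact sq_norm_div_le_weightedEnergy hz hf.differentiableOn (measure_ne_top _ _)

/-- A holomorphic function `h` on `ℂ ∖ {0}` whose squared modulus is integrable
against the weight `1 / (|η|² (|η|² + |η|⁻²))` (Lebesgue area measure) is constant. -/
theorem stmt0 (h : ℂ → ℂ) (hol : DifferentiableOn ℂ h ({0}ᶜ : Set ℂ))
    (hint : ∫⁻ η in ({0}ᶜ : Set ℂ),
        ENNReal.ofReal (‖h η‖ ^ 2 / (‖η‖ ^ 2 * (‖η‖ ^ 2 + (‖η‖ ^ 2)⁻¹))) < ⊤) :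
    ∃ c : ℂ, ∀ η : ℂ, η ≠ 0 → h η = c := by
  have : IsFiniteMeasure (weightedEnergy h) := ⟨weightedEnergy_univ h ▸ hint⟩
  obtain ⟨H, hH, hHh⟩ := Complex.exists_differentiable_eq_of_tendsto_mul_nhdsNE_zero hol
    (tendsto_mul_nhdsNE_zero_of_weightedEnergy hol)
  have hHh_ae : H =ᵐ[volume] h := by
    filter_upwards [compl_mem_ae_iff.2 (measure_singleton (0 : ℂ))] with z hz using hHh z hz
  have : IsFiniteMeasure (weightedEnergy H) := by rwa [weightedEnergy_congr_ae hHh_ae]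
  obtain ⟨a, ha⟩ :=
    hH.exists_const_forall_eq_of_isLittleO (isLittleO_cocompact_of_weightedEnergy hH)
  exact ⟨a, fun η hη => (hHh η hη).symm.trans (ha η)⟩
end

section
/- Let p, q ∈ ℝ and τ ∈ ℍ (upper half plane). The following are equivalent: (1) there exist A > 0 and 0 < δ < 1 such that dist((np, nq), ℤ²) ≥ Aδⁿ for all positive integers n; (2) there exists a > 0 such that sup over (m₁,m₂,m₃) ∈ ℤ³∖{0} of e^{−a·max(|m₁|,|m₂|)} / |τ(pm₂ − m₁) + m₃ − qm₂| is finite. -/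
/-!
For `τ ∉ ℝ` the map `(x, y) ↦ τ x + y` is an `ℝ`-linear isomorphism `ℝ² ≃ ℂ`, so
`|τ (p m₂ - m₁) + m₃ - q m₂|` is comparable to the distance from `m₂ (p, q)` to the lattice
point `(m₁, m₃)`. Under this comparison the two conditions become the same statement with
`δ = e^{-a}`, up to two harmless cases: when `m₂ = 0` the distance is that of a nonzero lattice
point to the origin, hence at least `1`; and when `|m₁|` is much larger than `n = m₂`, the
distance is at least `n`, while otherwise `max (|m₁|, |m₂|)` is at most a constant times `n`.
-/

open Real

def ExpSeparatedFromLattice (p q : ℝ) : Prop :=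
  ∃ A : ℝ, 0 < A ∧ ∃ δ : ℝ, 0 < δ ∧ δ < 1 ∧ ∀ n : ℕ, 0 < n → ∀ m₁ m₂ : ℤ,
    A * δ ^ n ≤ √((n * p - m₁) ^ 2 + (n * q - m₂) ^ 2)

def ExpBoundedInvLinearForm (p q : ℝ) (τ : ℂ) : Prop :=
  ∃ a : ℝ, 0 < a ∧ ∃ M : ℝ, ∀ m₁ m₂ m₃ : ℤ, (m₁, m₂, m₃) ≠ (0, 0, 0) →
    exp (-a * max |(m₁ : ℝ)| |(m₂ : ℝ)|) ≤ M * ‖τ * ((p : ℂ) * m₂ - m₁) + m₃ - (q : ℂ) * m₂‖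

lemma sqrt_sq_add_sq_le_abs_add_abs (x y : ℝ) : √(x ^ 2 + y ^ 2) ≤ |x| + |y| :=
  (sqrt_le_left (by positivity)).2 <| by
    nlinarith [sq_abs x, sq_abs y, abs_nonneg x, abs_nonneg y]

lemma abs_le_sqrt_sq_add_sq (x y : ℝ) : |x| ≤ √(x ^ 2 + y ^ 2) :=
  abs_le_sqrt (le_add_of_nonneg_right (sq_nonneg y))

lemma norm_mul_add_le (τ : ℂ) (x y : ℝ) : ‖τ * x + y‖ ≤ (‖τ‖ + 1) * √(x ^ 2 + y ^ 2) :=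
  calc ‖τ * x + y‖ ≤ ‖τ‖ * |x| + |y| := by
        simpa [Complex.norm_real] using norm_add_le (τ * x) (y : ℂ)
    _ ≤ ‖τ‖ * √(x ^ 2 + y ^ 2) + √(x ^ 2 + y ^ 2) := by
        gcongr
        · exact abs_le_sqrt_sq_add_sq x y
        · simpa [add_comm] using abs_le_sqrt_sq_add_sq y x
    _ = (‖τ‖ + 1) * √(x ^ 2 + y ^ 2) := by ring

/-- `|x|` is read off the imaginary part `τ.im * x`, and then `|y| ≤ |τ x + y| + |τ| |x|`. -/
lemma sqrt_sq_add_sq_le_mul_norm_mul_add {τ : ℂ} (hτ : τ.im ≠ 0) (x y : ℝ) :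
    √(x ^ 2 + y ^ 2) ≤ ((‖τ‖ + 1) / |τ.im| + 1) * ‖τ * x + y‖ := by
  set z := τ * x + y
  have hx : |x| ≤ ‖z‖ / |τ.im| := by
    rw [le_div_iff₀ (abs_pos.2 hτ), mul_comm, ← abs_mul]
    simpa [z] using Complex.abs_im_le_norm z
  have hy : |y| ≤ ‖z‖ + ‖τ‖ * |x| := by
    simpa [z, Complex.norm_real] using norm_sub_le z (τ * x)
  calc √(x ^ 2 + y ^ 2) ≤ |x| + |y| := sqrt_sq_add_sq_le_abs_add_abs x y
    _ ≤ (‖τ‖ + 1) * |x| + ‖z‖ := by linarith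
    _ ≤ (‖τ‖ + 1) * (‖z‖ / |τ.im|) + ‖z‖ := by gcongr
    _ = ((‖τ‖ + 1) / |τ.im| + 1) * ‖z‖ := by ring

lemma mul_sub_add_sub_eq (τ : ℂ) (p q : ℝ) (m₁ m₂ m₃ : ℤ) :
    τ * ((p : ℂ) * m₂ - m₁) + m₃ - (q : ℂ) * m₂
      = τ * ((p * m₂ - m₁ : ℝ) : ℂ) + ((m₃ - q * m₂ : ℝ) : ℂ) := by
  push_cast; ring

lemma one_le_sqrt_intCast_sq_add_sq {m₁ m₃ : ℤ} (h : m₁ ≠ 0) :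
    1 ≤ √((m₁ : ℝ) ^ 2 + (m₃ : ℝ) ^ 2) :=
  calc (1 : ℝ) ≤ |(m₁ : ℝ)| := by exact_mod_cast Int.one_le_abs h
    _ ≤ _ := abs_le_sqrt_sq_add_sq _ _

lemma mul_pow_natAbs_le_sqrt {p q A δ : ℝ}
    (h : ∀ n : ℕ, 0 < n → ∀ m₁ m₂ : ℤ, A * δ ^ n ≤ √((n * p - m₁) ^ 2 + (n * q - m₂) ^ 2))
    {m₂ : ℤ} (hm₂ : m₂ ≠ 0) (m₁ m₃ : ℤ) :
    A * δ ^ m₂.natAbs ≤ √((p * m₂ - m₁) ^ 2 + (m₃ - q * m₂) ^ 2) := by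
  obtain ⟨n, rfl | rfl⟩ := Int.eq_nat_or_neg m₂
  · have hn : 0 < n := by omega
    convert h n hn m₁ m₃ using 2
    · simp
    · push_cast; ring
  · have hn : 0 < n := by omega
    convert h n hn (-m₁) (-m₃) using 2
    · simp
    · push_cast; ring

lemma min_mul_exp_le_sqrt {p q A δ : ℝ} (hA : 0 ≤ A) (hδ₀ : 0 < δ) (hδ₁ : δ ≤ 1)
    (h : ∀ n : ℕ, 0 < n → ∀ m₁ m₂ : ℤ, A * δ ^ n ≤ √((n * p - m₁) ^ 2 + (n * q - m₂) ^ 2))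
    {m₁ m₂ m₃ : ℤ} (hm : (m₁, m₂, m₃) ≠ (0, 0, 0)) :
    min A 1 * exp (log δ * max |(m₁ : ℝ)| |(m₂ : ℝ)|)
      ≤ √((p * m₂ - m₁) ^ 2 + (m₃ - q * m₂) ^ 2) := by
  have hlog : log δ ≤ 0 := log_nonpos hδ₀.le hδ₁
  rcases eq_or_ne m₂ 0 with rfl | hm₂
  · have hm' : m₁ ≠ 0 ∨ m₃ ≠ 0 := by
      by_contra! h0
      exact hm (by simp [h0.1, h0.2])
    refine (mul_le_one₀ (min_le_right _ _) (exp_pos _).le (exp_le_one_iff.2 ?_)).trans ?_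
    · exact mul_nonpos_of_nonpos_of_nonneg hlog (by positivity)
    simp only [Int.cast_zero, mul_zero, zero_sub, sub_zero, neg_sq]
    rcases hm' with hm₁ | hm₃
    · exact one_le_sqrt_intCast_sq_add_sq hm₁
    · rw [add_comm]; exact one_le_sqrt_intCast_sq_add_sq hm₃
  · have hn : (m₂.natAbs : ℝ) ≤ max |(m₁ : ℝ)| |(m₂ : ℝ)| := by
      rw [Nat.cast_natAbs, Int.cast_abs]; exact le_max_right _ _
    calc min A 1 * exp (log δ * max |(m₁ : ℝ)| |(m₂ : ℝ)|)
          ≤ A * exp (log δ * m₂.natAbs) :=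
          mul_le_mul (min_le_left _ _) (exp_le_exp.2 (mul_le_mul_of_nonpos_left hn hlog))
            (exp_pos _).le hA
      _ = A * δ ^ m₂.natAbs := by rw [mul_comm (log δ), exp_nat_mul, exp_log hδ₀]
      _ ≤ _ := mul_pow_natAbs_le_sqrt h hm₂ m₁ m₃

theorem ExpSeparatedFromLattice.expBoundedInvLinearForm {p q : ℝ} {τ : ℂ} (hτ : τ.im ≠ 0)
    (h : ExpSeparatedFromLattice p q) : ExpBoundedInvLinearForm p q τ := by
  obtain ⟨A, hA, δ, hδ₀, hδ₁, h⟩ := h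
  set K := (‖τ‖ + 1) / |τ.im| + 1
  have hA₁ : 0 < min A 1 := lt_min hA one_pos
  refine ⟨-log δ, neg_pos.2 (log_neg hδ₀ hδ₁), K / min A 1, fun m₁ m₂ m₃ hm => ?_⟩
  rw [mul_sub_add_sub_eq, neg_neg]
  calc exp (log δ * max |(m₁ : ℝ)| |(m₂ : ℝ)|)
        ≤ (min A 1)⁻¹ * √((p * m₂ - m₁) ^ 2 + (m₃ - q * m₂) ^ 2) := by
        rw [le_inv_mul_iff₀ hA₁]
        exact min_mul_exp_le_sqrt hA.le hδ₀ hδ₁.le h hm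
    _ ≤ (min A 1)⁻¹ * (K * ‖τ * ((p * m₂ - m₁ : ℝ) : ℂ) + ((m₃ - q * m₂ : ℝ) : ℂ)‖) := by
        gcongr
        exact sqrt_sq_add_sq_le_mul_norm_mul_add hτ _ _
    _ = K / min A 1 * ‖τ * ((p * m₂ - m₁ : ℝ) : ℂ) + ((m₃ - q * m₂ : ℝ) : ℂ)‖ := by ring

lemma one_le_sqrt_of_lt_abs {p q : ℝ} {n : ℕ} (hn : 0 < n) {m₁ m₂ : ℤ}
    (h : (|p| + 1) * n < |(m₁ : ℝ)|) : 1 ≤ √((n * p - m₁) ^ 2 + (n * q - m₂) ^ 2) := by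
  have hn₁ : (1 : ℝ) ≤ n := by exact_mod_cast hn
  calc (1 : ℝ) ≤ |(m₁ : ℝ)| - |(n * p : ℝ)| := by
        rw [abs_mul, Nat.abs_cast]; nlinarith
    _ ≤ |n * p - m₁| := by rw [abs_sub_comm]; exact abs_sub_abs_le_abs_sub _ _
    _ ≤ _ := abs_le_sqrt_sq_add_sq _ _

theorem ExpBoundedInvLinearForm.expSeparatedFromLattice {p q : ℝ} {τ : ℂ}
    (h : ExpBoundedInvLinearForm p q τ) : ExpSeparatedFromLattice p q := by
  obtain ⟨a, ha, M, h⟩ := h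
  set C := |p| + 1
  set K := max M 1 * (‖τ‖ + 1)
  have hK : 0 < K := by positivity
  have haC : 0 < a * C := by positivity
  refine ⟨min K⁻¹ 1, by positivity, exp (-(a * C)), exp_pos _, exp_lt_one_iff.2 (by linarith),
    fun n hn m₁ m₂ => ?_⟩
  rcases le_or_gt |(m₁ : ℝ)| (C * n) with hsmall | hlarge
  · have hmax : max |(m₁ : ℝ)| |((n : ℤ) : ℝ)| ≤ C * n := by
      refine max_le hsmall ?_
      rw [Int.cast_natCast, Nat.abs_cast]
      exact le_mul_of_one_le_left n.cast_nonneg (by simp [C])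
    have hM := h m₁ n m₂ (by simp [hn.ne'])
    rw [mul_sub_add_sub_eq, Int.cast_natCast] at hM
    calc min K⁻¹ 1 * exp (-(a * C)) ^ n
          ≤ K⁻¹ * exp (-a * max |(m₁ : ℝ)| |((n : ℤ) : ℝ)|) := by
          rw [← exp_nat_mul]
          refine mul_le_mul (min_le_left _ _) (exp_le_exp.2 ?_) (exp_pos _).le (by positivity)
          nlinarith [mul_le_mul_of_nonneg_left hmax ha.le]
      _ ≤ K⁻¹ * (max M 1 * ‖τ * ((p * n - m₁ : ℝ) : ℂ) + ((m₂ - q * n : ℝ) : ℂ)‖) := by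
          gcongr
          exact hM.trans (by gcongr; exact le_max_left _ _)
      _ ≤ K⁻¹ * (max M 1 * ((‖τ‖ + 1) * √((p * n - m₁) ^ 2 + (m₂ - q * n) ^ 2))) := by
          gcongr
          exact norm_mul_add_le τ _ _
      _ = √((n * p - m₁) ^ 2 + (n * q - m₂) ^ 2) := by
          rw [← mul_assoc (max M 1), ← show K = max M 1 * (‖τ‖ + 1) from rfl,
            inv_mul_cancel_left₀ hK.ne']
          congr 1
          ring
  · calc min K⁻¹ 1 * exp (-(a * C)) ^ n ≤ 1 := by
          refine mul_le_one₀ (min_le_right _ _) (by positivity) ?_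
          exact pow_le_one₀ (exp_pos _).le (exp_le_one_iff.2 (by linarith))
      _ ≤ _ := one_le_sqrt_of_lt_abs hn hlarge

/-- For `p, q ∈ ℝ` and `τ` in the upper half plane, the following are
equivalent:
(1) there exist `A > 0` and `0 < δ < 1` with `dist((np, nq), ℤ²) ≥ A δ^n` for all `n > 0`;
(2) there exists `a > 0` such that
`sup_{(m₁,m₂,m₃) ∈ ℤ³∖{0}} e^{-a·max(|m₁|,|m₂|)} / |τ(pm₂ − m₁) + m₃ − qm₂| < ∞`
(the finiteness of the sup is expressed as a bound `M`, multiplied through to avoid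
division by a possibly vanishing denominator). -/
theorem stmt4 (p q : ℝ) (τ : ℂ) (hτ : 0 < τ.im) :
    (∃ A : ℝ, 0 < A ∧ ∃ δ : ℝ, 0 < δ ∧ δ < 1 ∧ ∀ n : ℕ, 0 < n → ∀ m₁ m₂ : ℤ,
        A * δ ^ n ≤ Real.sqrt ((n * p - m₁) ^ 2 + (n * q - m₂) ^ 2)) ↔
      (∃ a : ℝ, 0 < a ∧ ∃ M : ℝ, ∀ m₁ m₂ m₃ : ℤ, (m₁, m₂, m₃) ≠ (0, 0, 0) →
        Real.exp (-a * max |(m₁ : ℝ)| |(m₂ : ℝ)|) ≤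
          M * ‖τ * ((p : ℂ) * m₂ - m₁) + m₃ - (q : ℂ) * m₂‖) :=
  ⟨ExpSeparatedFromLattice.expBoundedInvLinearForm hτ.ne',
    ExpBoundedInvLinearForm.expSeparatedFromLattice⟩
end

section
/- Fix λ ∈ ℂ with 0 < |λ| < 1, and let f : (ℂ∖{0})² → ℝ≥0 be a measurable function invariant under σ(ξ,η) = (λξ, μη) for some μ with |μ| = 1, i.e., f∘σ = f. Let ψ(ξ,η) = (log|ξ|²)² + log(|η|² + 1/|η|²), and let dλ̃ be a σ-invariant measure on (ℂ∖{0})². If ∫_{D₀} f dλ̃ < ∞, where D₀ = {|λ| ≤ |ξ| ≤ 1}, then ∫_{(ℂ*)²} f · e^{−ψ} dλ̃ ≤ (Σ_{n≥0} 2·e^{−n²(log|λ|²)²}) · ∫_{D₀} f dλ̃ < ∞. -/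
open MeasureTheory Real Set
open scoped ENNReal NNReal

/-!
The shells `D_n = {|λ|^{n+1} ≤ |ξ| ≤ |λ|^n}`, `n ∈ ℤ`, cover `(ℂ*)²` and satisfy
`σ⁻¹ D_{n+1} = D_n`, so by invariance of `f` and of the measure every `∫_{D_n} f` equals
`∫_{D₀} f`. On `D_m` and on `D_{-(m+1)}` one has `|log|ξ|²| ≥ m |log|λ|²|`, while
`log(|η|² + |η|⁻²) ≥ 0`; hence `e^{-ψ} ≤ e^{-m²(log|λ|²)²}` there, and summing over the two
families of shells gives the bound.
-/

/-- The paper's `D_n`, for `r = |λ|`. -/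
def shell {𝕜 β : Type*} [Norm 𝕜] (r : ℝ) (n : ℤ) : Set (𝕜 × β) :=
  {p | r ^ (n + 1) ≤ ‖p.1‖ ∧ ‖p.1‖ ≤ r ^ n}

/-- The weight `e^{-ψ}`. -/
noncomputable def psiWeight {𝕜 E : Type*} [Norm 𝕜] [Norm E] (p : 𝕜 × E) : ℝ≥0∞ :=
  ENNReal.ofReal (exp (-((log (‖p.1‖ ^ 2)) ^ 2 + log (‖p.2‖ ^ 2 + (‖p.2‖ ^ 2)⁻¹))))

section Shell

variable {𝕜 β : Type*} [NormedDivisionRing 𝕜]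

lemma measurableSet_shell [MeasurableSpace 𝕜] [OpensMeasurableSpace 𝕜] [MeasurableSpace β]
    (r : ℝ) (n : ℤ) : MeasurableSet (shell r n : Set (𝕜 × β)) :=
  (measurableSet_le measurable_const measurable_fst.norm).inter
    (measurableSet_le measurable_fst.norm measurable_const)

lemma preimage_shell_succ {a : 𝕜} (ha : a ≠ 0) (g : β → β) (n : ℤ) :
    (fun p : 𝕜 × β => (a * p.1, g p.2)) ⁻¹' shell ‖a‖ (n + 1) = shell ‖a‖ n := by
  have ha' : 0 < ‖a‖ := norm_pos_iff.mpr ha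
  ext p
  simp only [shell, mem_preimage, mem_ofPred_eq, norm_mul, zpow_add_one₀ ha'.ne',
    mul_comm _ ‖a‖, mul_le_mul_iff_right₀ ha']

lemma subset_iUnion_shell {r : ℝ} (hr0 : 0 < r) (hr1 : r < 1) :
    {p : 𝕜 × β | p.1 ≠ 0} ⊆ ⋃ n : ℤ, shell r n := by
  intro p hp
  obtain ⟨n, hn1, hn2⟩ :=
    exists_mem_Ico_zpow (norm_pos_iff.mpr hp) ((one_lt_inv₀ hr0).mpr hr1)
  refine mem_iUnion.mpr ⟨-(n + 1), ?_, ?_⟩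
  · simpa [inv_zpow', neg_add_cancel_right] using hn1
  · simpa [inv_zpow'] using hn2.le

end Shell

lemma natCast_mul_abs_log_le_of_le_pow {r x : ℝ} {m : ℕ} (hx : 0 < x) (hr0 : 0 < r)
    (hr1 : r ≤ 1) (h : x ≤ r ^ m) : m * |log r| ≤ |log x| := by
  have hlogr : log r ≤ 0 := log_nonpos hr0.le hr1
  have hlogx : log x ≤ m * log r := by simpa [log_pow] using log_le_log hx h
  rw [abs_of_nonpos hlogr, abs_of_nonpos (hlogx.trans (by nlinarith))]
  linarith

lemma natCast_mul_abs_log_le_of_inv_pow_le {r x : ℝ} {m : ℕ} (hr0 : 0 < r) (hr1 : r ≤ 1)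
    (h : (r ^ m)⁻¹ ≤ x) : m * |log r| ≤ |log x| := by
  have hx : 0 < x := lt_of_lt_of_le (by positivity) h
  simpa [log_inv] using
    natCast_mul_abs_log_le_of_le_pow (inv_pos.2 hx) hr0 hr1 (inv_le_of_inv_le₀ (by positivity) h)

lemma natCast_mul_abs_log_le_of_mem_shell {𝕜 β : Type*} [Norm 𝕜] {r : ℝ} (hr0 : 0 < r)
    (hr1 : r ≤ 1) {n : ℤ} {m : ℕ} (hnm : n = m ∨ n = -(m + 1)) {p : 𝕜 × β}
    (hp : p ∈ shell r n) : m * |log r| ≤ |log ‖p.1‖| := by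
  obtain ⟨hlo, hhi⟩ := hp
  rcases hnm with rfl | rfl
  · exact natCast_mul_abs_log_le_of_le_pow (lt_of_lt_of_le (by positivity) hlo) hr0 hr1
      (by simpa using hhi)
  · exact natCast_mul_abs_log_le_of_inv_pow_le hr0 hr1 (by simpa using hlo)

lemma log_add_inv_nonneg {y : ℝ} (hy : 0 ≤ y) : 0 ≤ log (y + y⁻¹) := by
  rcases hy.eq_or_lt with rfl | hy
  · simp
  apply log_nonneg
  rcases le_total 1 y with h | h
  · linarith [inv_pos.2 hy]
  · linarith [one_le_inv₀ hy |>.2 h]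

lemma psiWeight_le {𝕜 E : Type*} [Norm 𝕜] [Norm E] {r : ℝ} {m : ℕ} {p : 𝕜 × E}
    (h : m * |log r| ≤ |log ‖p.1‖|) :
    psiWeight p ≤ ENNReal.ofReal (exp (-(m : ℝ) ^ 2 * (log (r ^ 2)) ^ 2)) := by
  have hsq : (m : ℝ) ^ 2 * (log (r ^ 2)) ^ 2 ≤ (log (‖p.1‖ ^ 2)) ^ 2 := by
    have := pow_le_pow_left₀ (by positivity) h 2
    simp only [log_pow, Nat.cast_ofNat, mul_pow, sq_abs] at this ⊢
    nlinarith
  have := log_add_inv_nonneg (sq_nonneg ‖p.2‖)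
  exact ENNReal.ofReal_le_ofReal (exp_le_exp.2 (by linarith))

lemma setLIntegral_eq_of_preimage_succ {α : Type*} [MeasurableSpace α] {ν : Measure α}
    {T : α → α} (hT : MeasurePreserving T ν ν) {f : α → ℝ≥0∞} (hf : Measurable f)
    (hfT : ∀ x, f (T x) = f x) {A : ℤ → Set α} (hA : ∀ n, MeasurableSet (A n))
    (hpre : ∀ n, T ⁻¹' A (n + 1) = A n) (n : ℤ) :
    ∫⁻ x in A n, f x ∂ν = ∫⁻ x in A 0, f x ∂ν := by
  have hstep (n : ℤ) : ∫⁻ x in A n, f x ∂ν = ∫⁻ x in A (n + 1), f x ∂ν := by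
    rw [← hT.setLIntegral_comp_preimage (hA (n + 1)) hf, hpre]
    simp only [hfT]
  induction n using Int.induction_on with
  | zero => rfl
  | succ k ih => rw [← hstep, ih]
  | pred k ih => rw [hstep, sub_add_cancel, ih]

/-- The pieces `A m` and `A (-(m + 1))` share the bound `b m`, whence the factor `2`. -/
lemma setLIntegral_le_of_subset_iUnion_int {α : Type*} [MeasurableSpace α] {ν : Measure α}
    {S : Set α} {A : ℤ → Set α} (hS : S ⊆ ⋃ n, A n) {F : α → ℝ≥0∞} {b : ℕ → ℝ}
    (hb0 : ∀ m, 0 ≤ b m) (hb : Summable b) {I : ℝ≥0∞}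
    (hA : ∀ (m : ℕ) (n : ℤ), n = m ∨ n = -(m + 1) →
      ∫⁻ x in A n, F x ∂ν ≤ ENNReal.ofReal (b m) * I) :
    ∫⁻ x in S, F x ∂ν ≤ ENNReal.ofReal (∑' m, 2 * b m) * I :=
  calc ∫⁻ x in S, F x ∂ν
      ≤ ∑' n : ℤ, ∫⁻ x in A n, F x ∂ν :=
        (lintegral_mono_set hS).trans (lintegral_iUnion_le _ _)
    _ = ∑' m : ℕ, ∫⁻ x in A m, F x ∂ν
          + ∑' m : ℕ, ∫⁻ x in A (-(m + 1)), F x ∂ν :=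
      tsum_of_nat_of_neg_add_one ENNReal.summable ENNReal.summable
    _ ≤ ∑' m : ℕ, ENNReal.ofReal (b m) * I + ∑' m : ℕ, ENNReal.ofReal (b m) * I :=
      add_le_add (ENNReal.tsum_le_tsum fun m => hA m _ (.inl rfl))
        (ENNReal.tsum_le_tsum fun m => hA m _ (.inr rfl))
    _ = ENNReal.ofReal (∑' m, 2 * b m) * I := by
      rw [ENNReal.ofReal_tsum_of_nonneg (fun m => by linarith [hb0 m]) (hb.mul_left 2)]
      simp only [ENNReal.ofReal_mul zero_le_two, ENNReal.ofReal_ofNat, ENNReal.tsum_mul_left,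
        ENNReal.tsum_mul_right]
      ring

lemma summable_exp_neg_sq_mul {c : ℝ} (hc : 0 < c) :
    Summable fun m : ℕ => exp (-(m : ℝ) ^ 2 * c) := by
  simpa [mul_comm] using
    summable_exp_nat_mul_of_ge (neg_neg_of_pos hc) (f := fun m => (m : ℝ) ^ 2) fun m => by
      exact_mod_cast Nat.le_self_pow two_ne_zero m

theorem stmt6_general (l μ : ℂ) (hl0 : 0 < ‖l‖) (hl1 : ‖l‖ < 1)
    (ν : Measure (ℂ × ℂ)) (f : ℂ × ℂ → ℝ≥0) (hf : Measurable f)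
    (hinv : ∀ p : ℂ × ℂ, f (l * p.1, μ * p.2) = f p)
    (hν : MeasurePreserving (fun p : ℂ × ℂ => (l * p.1, μ * p.2)) ν ν)
    (hfin : ∫⁻ p in {p : ℂ × ℂ | ‖l‖ ≤ ‖p.1‖ ∧ ‖p.1‖ ≤ 1}, (f p : ℝ≥0∞) ∂ν < ⊤) :
    ∫⁻ p in {p : ℂ × ℂ | p.1 ≠ 0 ∧ p.2 ≠ 0},
        (f p : ℝ≥0∞) * ENNReal.ofReal
          (Real.exp (-((Real.log (‖p.1‖ ^ 2)) ^ 2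
            + Real.log (‖p.2‖ ^ 2 + (‖p.2‖ ^ 2)⁻¹)))) ∂ν
      ≤ ENNReal.ofReal (∑' n : ℕ, 2 * Real.exp (-(n : ℝ) ^ 2 * (Real.log (‖l‖ ^ 2)) ^ 2))
          * ∫⁻ p in {p : ℂ × ℂ | ‖l‖ ≤ ‖p.1‖ ∧ ‖p.1‖ ≤ 1}, (f p : ℝ≥0∞) ∂ν ∧
    ∫⁻ p in {p : ℂ × ℂ | p.1 ≠ 0 ∧ p.2 ≠ 0},
        (f p : ℝ≥0∞) * ENNReal.ofReal
          (Real.exp (-((Real.log (‖p.1‖ ^ 2)) ^ 2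
            + Real.log (‖p.2‖ ^ 2 + (‖p.2‖ ^ 2)⁻¹)))) ∂ν < ⊤ := by
  have hl : l ≠ 0 := norm_pos_iff.mp hl0
  have hD₀ : shell ‖l‖ 0 = {p : ℂ × ℂ | ‖l‖ ≤ ‖p.1‖ ∧ ‖p.1‖ ≤ 1} := by simp [shell]
  have hshell (m : ℕ) (n : ℤ) (hnm : n = m ∨ n = -(m + 1)) :
      ∫⁻ p in shell ‖l‖ n, f p * psiWeight p ∂ν
        ≤ ENNReal.ofReal (exp (-(m : ℝ) ^ 2 * (log (‖l‖ ^ 2)) ^ 2))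
          * ∫⁻ p in shell ‖l‖ 0, (f p : ℝ≥0∞) ∂ν := by
    rw [← setLIntegral_eq_of_preimage_succ hν hf.coe_nnreal_ennreal (by simp [hinv])
      (measurableSet_shell _) (preimage_shell_succ hl _) n,
      ← lintegral_const_mul' _ _ ENNReal.ofReal_ne_top]
    refine setLIntegral_mono' (measurableSet_shell _ n) fun p hp => ?_
    rw [mul_comm]
    exact mul_le_mul_left
      (psiWeight_le (natCast_mul_abs_log_le_of_mem_shell hl0 hl1.le hnm hp)) _
  have hlog : log (‖l‖ ^ 2) < 0 := log_neg (by positivity) (by nlinarith)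
  have hmain :=
    setLIntegral_le_of_subset_iUnion_int (S := {p : ℂ × ℂ | p.1 ≠ 0 ∧ p.2 ≠ 0})
    (fun p hp => subset_iUnion_shell hl0 hl1 hp.1) (fun m => (exp_pos _).le)
    (summable_exp_neg_sq_mul (sq_pos_of_neg hlog)) hshell
  rw [hD₀] at hmain
  exact ⟨hmain, hmain.trans_lt (ENNReal.mul_lt_top ENNReal.ofReal_lt_top hfin)⟩

/-- Fix `λ ∈ ℂ` with `0 < |λ| < 1` and `μ` with `|μ| = 1`, let
`σ(ξ,η) = (λξ, μη)`, let `f : (ℂ∖{0})² → ℝ≥0` be measurable and `σ`-invariant, let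
`ψ(ξ,η) = (log|ξ|²)² + log(|η|² + 1/|η|²)` and let `ν` be a `σ`-invariant measure.
If `∫_{D₀} f dν < ∞`, where `D₀ = {|λ| ≤ |ξ| ≤ 1}`, then
`∫_{(ℂ*)²} f e^{-ψ} dν ≤ (Σ_{n≥0} 2 e^{-n²(log|λ|²)²}) · ∫_{D₀} f dν < ∞`. -/
theorem stmt6 (l μ : ℂ) (hl0 : 0 < ‖l‖) (hl1 : ‖l‖ < 1) (hμ : ‖μ‖ = 1)
    (ν : Measure (ℂ × ℂ)) (f : ℂ × ℂ → ℝ≥0) (hf : Measurable f)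
    (hinv : ∀ p : ℂ × ℂ, f (l * p.1, μ * p.2) = f p)
    (hν : MeasurePreserving (fun p : ℂ × ℂ => (l * p.1, μ * p.2)) ν ν)
    (hfin : ∫⁻ p in {p : ℂ × ℂ | ‖l‖ ≤ ‖p.1‖ ∧ ‖p.1‖ ≤ 1}, (f p : ℝ≥0∞) ∂ν < ⊤) :
    ∫⁻ p in {p : ℂ × ℂ | p.1 ≠ 0 ∧ p.2 ≠ 0},
        (f p : ℝ≥0∞) * ENNReal.ofReal
          (Real.exp (-((Real.log (‖p.1‖ ^ 2)) ^ 2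
            + Real.log (‖p.2‖ ^ 2 + (‖p.2‖ ^ 2)⁻¹)))) ∂ν
      ≤ ENNReal.ofReal (∑' n : ℕ, 2 * Real.exp (-(n : ℝ) ^ 2 * (Real.log (‖l‖ ^ 2)) ^ 2))
          * ∫⁻ p in {p : ℂ × ℂ | ‖l‖ ≤ ‖p.1‖ ∧ ‖p.1‖ ≤ 1}, (f p : ℝ≥0∞) ∂ν ∧
    ∫⁻ p in {p : ℂ × ℂ | p.1 ≠ 0 ∧ p.2 ≠ 0},
        (f p : ℝ≥0∞) * ENNReal.ofReal
          (Real.exp (-((Real.log (‖p.1‖ ^ 2)) ^ 2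
            + Real.log (‖p.2‖ ^ 2 + (‖p.2‖ ^ 2)⁻¹)))) ∂ν < ⊤ :=
  stmt6_general l μ hl0 hl1 ν f hf hinv hν hfin
end

section
/- Let X = ℂ²/Γ where Γ is generated by (0,1), (1,p), (τ,q) with τ ∈ ℍ and p, q ∈ ℝ. Then X is a toroidal group (i.e., admits no non-constant holomorphic functions) if and only if p or q is irrational. -/
/-!
Since `f` has period `1` in `w`, the restriction of `f (z, ·)` to the real line is a function on
the circle, with Fourier coefficients `cₙ z`. Each `cₙ` is entire, and the periods `(1, p)` and
`(τ, q)` give `cₙ (z + 1) = e(-n p) cₙ z` and `cₙ (z + τ) = e(-n q) cₙ z` with `e(x) = exp(2πix)`.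
Hence `‖cₙ‖` is doubly periodic, so bounded, and `cₙ` is constant by Liouville. When `p` or `q`
is irrational the factor differs from `1` for `n ≠ 0`, forcing `cₙ = 0`; then `f` is constant on
`ℂ × ℝ`, hence everywhere by the identity theorem. Conversely, if `N p, N q ∈ ℤ` with `N ≠ 0`,
then `(z, w) ↦ e(N w)` is a non-constant holomorphic function invariant under `Γ`.
-/

open Complex Function Metric Set Filter Topology MeasureTheory Bornology
open scoped Real

section ParametricIntegral

variable {E : Type*} [NormedAddCommGroup E] [NormedSpace ℂ E] [CompleteSpace E]

theorem differentiable_intervalIntegral_of_continuous {F : ℂ → ℝ → E}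
    (hF : Continuous (uncurry F)) (hF' : ∀ t, Differentiable ℂ (F · t)) (a b : ℝ) :
    Differentiable ℂ fun z => ∫ t in a..b, F z t := by
  -- the `z`-derivatives are dominated via Cauchy estimates on circles of radius `1`
  intro z₀
  obtain ⟨C, hC⟩ : ∃ C, ∀ p ∈ closedBall z₀ 2 ×ˢ uIcc a b, ‖uncurry F p‖ ≤ C :=
    ((isCompact_closedBall z₀ 2).prod isCompact_uIcc).exists_bound_of_continuousOn
      hF.continuousOn
  have hF_slice : ∀ z, Continuous (F z) := fun z => hF.comp (Continuous.prodMk_right z)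
  have hderiv_le : ∀ t ∈ uIcc a b, ∀ z ∈ ball z₀ 1, ‖deriv (F · t) z‖ ≤ C := by
    intro t ht z hz
    have hsphere : ∀ w ∈ sphere z 1, ‖F w t‖ ≤ C := fun w hw =>
      hC (w, t) ⟨mem_closedBall.2 (by
        linarith [dist_triangle w z z₀, mem_sphere.1 hw, mem_ball.1 hz]), ht⟩
    simpa using norm_deriv_le_of_forall_mem_sphere_norm_le one_pos (hF' t).diffContOnCl hsphere
  refine (intervalIntegral.hasDerivAt_integral_of_dominated_loc_of_deriv_le
    (F' := fun z t => deriv (F · t) z) (bound := fun _ => C) (ball_mem_nhds z₀ one_pos)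
    (.of_forall fun z => (hF_slice z).aestronglyMeasurable) ((hF_slice z₀).intervalIntegrable a b)
    ?_ (.of_forall fun t ht z hz => hderiv_le t (uIoc_subset_uIcc ht) z hz)
    intervalIntegrable_const
    (.of_forall fun t _ z _ => (hF' t z).hasDerivAt)).2.differentiableAt
  exact (stronglyMeasurable_deriv_with_param (f := fun t z => F z t)
    (hF.comp continuous_swap)).comp_measurable (measurable_id.prodMk measurable_const)
    |>.aestronglyMeasurable

end ParametricIntegral

section Fourier

variable {T : ℝ} [Fact (0 < T)] {E : Type*} [NormedAddCommGroup E] [NormedSpace ℂ E]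

theorem fourierCoeff_comp_add_right (F : AddCircle T → E) (s : AddCircle T) (n : ℤ) :
    fourierCoeff (fun x => F (x + s)) n = fourier n s • fourierCoeff F n := by
  have key : ∀ x, fourier (-n) x = fourier n s * fourier (-n) (x + s) := fun x => by
    rw [fourier_apply, fourier_apply, fourier_apply, ← Circle.coe_mul, ← AddCircle.toCircle_add]
    congr 2
    simp only [smul_add, neg_smul]
    abel
  calc fourierCoeff (fun x => F (x + s)) n
      = ∫ x, fourier n s • (fourier (-n) (x + s) • F (x + s)) ∂AddCircle.haarAddCircle := by
        simp only [fourierCoeff, ← mul_smul, ← key]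
    _ = fourier n s • fourierCoeff F n := by
        rw [integral_smul, integral_add_right_eq_self (fun x => fourier (-n) x • F x)]
        rfl

theorem differentiable_fourierCoeff [CompleteSpace E] {φ : ℂ → AddCircle T → E}
    (hφ : Continuous fun p : ℂ × ℝ => φ p.1 p.2) (hφ' : ∀ x, Differentiable ℂ (φ · x)) (n : ℤ) :
    Differentiable ℂ fun z => fourierCoeff (φ z) n := by
  simp only [fourierCoeff_eq_intervalIntegral _ n 0]
  refine (differentiable_intervalIntegral_of_continuous ?_ (fun t => ?_) _ _).const_smul _
  · exact ((fourier (-n)).continuous.comp (continuous_quotient_mk'.comp continuous_snd)).smul hφ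
  · exact (hφ' t).const_smul _

theorem eq_fourierCoeff_zero_of_forall_ne_zero (F : C(AddCircle T, ℂ))
    (hF : ∀ n ≠ 0, fourierCoeff F n = 0) (x : AddCircle T) : F x = fourierCoeff F 0 := by
  have hsingle : HasSum (fun n => fourierCoeff F n • fourier n x) (fourierCoeff F 0) := by
    simpa using hasSum_single (f := fun n => fourierCoeff F n • fourier n x) 0
      fun n hn => by simp [hF n hn]
  exact (has_pointwise_sum_fourier_series_of_summable
    (hasSum_single 0 hF).summable x).unique hsingle

end Fourier

theorem Irrational.fourier_coe_ne_one {x : ℝ} (hx : Irrational x) {n : ℤ} (hn : n ≠ 0) :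
    fourier n (x : UnitAddCircle) ≠ 1 := by
  rw [fourier_coe_apply, ofReal_one, div_one, Ne, Complex.exp_eq_one_iff]
  rintro ⟨k, hk⟩
  apply (hx.intCast_mul hn).ne_int k
  have : (2 * π * I : ℂ) ≠ 0 := by simp [Real.pi_ne_zero]
  exact_mod_cast mul_left_cancel₀ this
    (by linear_combination hk : 2 * π * I * (n * x) = 2 * π * I * k)

theorem ZSpan.isBounded_range_of_periodic {E F ι : Type*} [NormedAddCommGroup E]
    [NormedSpace ℝ E] [PseudoMetricSpace F] [Fintype ι]
    (b : Module.Basis ι ℝ E) {φ : E → F} (hφ : Continuous φ) (hper : ∀ i, Periodic φ (b i)) :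
    IsBounded (range φ) := by
  have hspan : ∀ v ∈ Submodule.span ℤ (range b), Periodic φ v := by
    intro v hv
    induction hv using Submodule.span_induction with
    | mem v hv => obtain ⟨i, rfl⟩ := hv; exact hper i
    | zero => exact fun x => by rw [add_zero]
    | add v w _ _ hv hw => exact hv.add_period hw
    | smul k v _ hv => exact hv.zsmul k
  have := b.finiteDimensional_of_finite
  have hcompact : IsCompact (closure (fundamentalDomain b)) :=
    (fundamentalDomain_isBounded b).isCompact_closure
  refine (hcompact.image hφ).isBounded.subset ?_
  rintro _ ⟨x, rfl⟩
  refine ⟨fract b x, subset_closure (fract_mem_fundamentalDomain b x), ?_⟩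
  rw [fract_apply]
  exact (hspan _ (floor b x).2).sub_eq x

theorem PeriodPair.apply_eq_apply_of_norm_periodic {E : Type*} [NormedAddCommGroup E]
    [NormedSpace ℂ E] (L : PeriodPair) {g : ℂ → E} (hg : Differentiable ℂ g)
    (h₁ : Periodic (‖g ·‖) L.ω₁) (h₂ : Periodic (‖g ·‖) L.ω₂) (z w : ℂ) : g z = g w := by
  have hbdd := ZSpan.isBounded_range_of_periodic L.basis hg.continuous.norm
    (by intro i; fin_cases i <;> simpa)
  refine hg.apply_eq_apply_of_bounded (isBounded_iff_forall_norm_le.2 ?_) z w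
  obtain ⟨C, hC⟩ := isBounded_iff_forall_norm_le.1 hbdd
  exact ⟨C, by rintro _ ⟨z, rfl⟩; simpa using hC _ ⟨z, rfl⟩⟩

theorem PeriodPair.eq_zero_of_mul_periodic (L : PeriodPair) {g : ℂ → ℂ} (hg : Differentiable ℂ g)
    {u v : ℂ} (hu : ‖u‖ = 1) (hv : ‖v‖ = 1) (h₁ : ∀ z, g (z + L.ω₁) = u * g z)
    (h₂ : ∀ z, g (z + L.ω₂) = v * g z) (huv : u ≠ 1 ∨ v ≠ 1) : g = 0 := by
  have hconst := L.apply_eq_apply_of_norm_periodic hg (fun z => by simp [h₁, hu])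
    (fun z => by simp [h₂, hv])
  have hfixed : ∀ {ω a}, (∀ z, g (z + ω) = a * g z) → a ≠ 1 → g 0 = 0 := fun h ha => by
    by_contra h0
    exact ha (mul_right_cancel₀ h0 (by rw [one_mul, ← h, hconst]))
  funext z
  rw [hconst z 0, Pi.zero_apply]
  exact huv.elim (hfixed h₁) (hfixed h₂)

theorem linearIndependent_one_of_im_ne_zero {τ : ℂ} (hτ : τ.im ≠ 0) :
    LinearIndependent ℝ ![1, τ] := by
  refine LinearIndependent.pair_iff.2 fun s t h => ?_
  have ht : t = 0 := by simpa [hτ] using congrArg Complex.im h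
  subst ht
  simpa using congrArg Complex.re h

theorem Differentiable.eq_of_forall_ofReal_eq {E : Type*} [NormedAddCommGroup E]
    [NormedSpace ℂ E] [CompleteSpace E] {g h : ℂ → E} (hg : Differentiable ℂ g)
    (hh : Differentiable ℂ h) (hgh : ∀ x : ℝ, g x = h x) : g = h := by
  have hreal : Tendsto ofReal (𝓝[≠] 0) (𝓝[≠] (0 : ℂ)) :=
    continuous_ofReal.continuousWithinAt.tendsto_nhdsWithin fun _ _ ↦ by simp_all
  exact AnalyticOnNhd.eq_of_frequently_eq (fun z _ => hg.analyticAt z)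
    (fun z _ => hh.analyticAt z) (hreal.frequently (.of_forall hgh))

theorem PeriodPair.exists_eq_const_of_comp_add (L : PeriodPair) {φ : ℂ → UnitAddCircle → ℂ}
    (hφ : Continuous fun p : ℂ × ℝ => φ p.1 p.2) (hφ' : ∀ x, Differentiable ℂ (φ · x))
    {s₁ s₂ : ℝ} (h₁ : ∀ z x, φ (z + L.ω₁) x = φ z (x + s₁))
    (h₂ : ∀ z x, φ (z + L.ω₂) x = φ z (x + s₂)) (hs : Irrational s₁ ∨ Irrational s₂) :
    ∃ c, ∀ z x, φ z x = c := by
  let c : ℤ → ℂ → ℂ := fun n z => fourierCoeff (φ z) n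
  have hc_diff : ∀ n, Differentiable ℂ (c n) := differentiable_fourierCoeff hφ hφ'
  have hc_shift : ∀ {ω : ℂ} {s : ℝ}, (∀ z x, φ (z + ω) x = φ z (x + s)) →
      ∀ n z, c n (z + ω) = fourier n (s : UnitAddCircle) * c n z := fun h n z => by
    simp only [c, funext (h z), fourierCoeff_comp_add_right, smul_eq_mul]
  have hunit : ∀ n (x : UnitAddCircle), ‖fourier n x‖ = 1 := fun n x => by
    rw [fourier_apply, Circle.norm_coe]
  have hc_zero : ∀ n ≠ 0, c n = 0 := fun n hn =>
    L.eq_zero_of_mul_periodic (hc_diff n) (hunit _ _) (hunit _ _) (hc_shift h₁ n) (hc_shift h₂ n)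
      (hs.imp (·.fourier_coe_ne_one hn) (·.fourier_coe_ne_one hn))
  have hc_const : ∀ z, c 0 z = c 0 0 := fun z =>
    L.apply_eq_apply_of_norm_periodic (hc_diff 0) (fun z => by simp [hc_shift h₁])
      (fun z => by simp [hc_shift h₂]) z 0
  refine ⟨c 0 0, fun z x => ?_⟩
  rw [← hc_const z]
  exact eq_fourierCoeff_zero_of_forall_ne_zero
    ⟨φ z, continuous_coinduced_dom.2 (hφ.comp (.prodMk_right z))⟩
    (fun n hn => congrFun (hc_zero n hn) z) x

theorem PeriodPair.eq_const_of_periodic_of_irrational (L : PeriodPair) {f : ℂ × ℂ → ℂ}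
    (hf : Differentiable ℂ f) (h₀ : ∀ z w, f (z, w + 1) = f (z, w)) {s₁ s₂ : ℝ}
    (h₁ : ∀ z w, f (z + L.ω₁, w + s₁) = f (z, w)) (h₂ : ∀ z w, f (z + L.ω₂, w + s₂) = f (z, w))
    (hs : Irrational s₁ ∨ Irrational s₂) : ∃ c, f = fun _ => c := by
  have hper : ∀ z, Periodic (fun t : ℝ => f (z, t)) 1 := fun z t => by simpa using h₀ z t
  let φ : ℂ → UnitAddCircle → ℂ := fun z => (hper z).lift
  have hshift : ∀ {ω : ℂ} {s : ℝ}, (∀ z w, f (z + ω, w + s) = f (z, w)) →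
      ∀ z x, φ (z + ω) x = φ z (x + (-s : ℝ)) := by
    intro ω s h z x
    induction x using QuotientAddGroup.induction_on with
    | H t =>
      change f (z + ω, t) = f (z, ((t + -s : ℝ) : ℂ))
      simpa [← sub_eq_add_neg] using h z (t - s)
  obtain ⟨c, hc⟩ := L.exists_eq_const_of_comp_add (φ := φ)
    (hf.continuous.comp (continuous_fst.prodMk (continuous_ofReal.comp continuous_snd)))
    (fun x => by
      induction x using QuotientAddGroup.induction_on with
      | H t => exact hf.comp (differentiable_id.prodMk (differentiable_const _)))
    (hshift h₁) (hshift h₂) (hs.imp Irrational.neg Irrational.neg)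
  refine ⟨c, funext fun ⟨z, w⟩ => congrFun (Differentiable.eq_of_forall_ofReal_eq
    (hf.comp ((differentiable_const z).prodMk differentiable_id)) (differentiable_const c)
    fun t => hc z t) w⟩

theorem exists_int_mul_eq_int_of_not_irrational {p q : ℝ} (hp : ¬Irrational p)
    (hq : ¬Irrational q) : ∃ N : ℤ, N ≠ 0 ∧ (∃ k : ℤ, N * p = k) ∧ ∃ l : ℤ, N * q = l := by
  obtain ⟨r, rfl⟩ := not_not.1 hp
  obtain ⟨s, rfl⟩ := not_not.1 hq
  refine ⟨r.den * s.den, by positivity, ⟨r.num * s.den, ?_⟩, ⟨s.num * r.den, ?_⟩⟩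
  · have := congrArg (Rat.cast : ℚ → ℝ) r.den_mul_eq_num
    push_cast at this ⊢
    linear_combination (s.den : ℝ) * this
  · have := congrArg (Rat.cast : ℚ → ℝ) s.den_mul_eq_num
    push_cast at this ⊢
    linear_combination (r.den : ℝ) * this

theorem periodic_cexp_two_pi_I_mul {N : ℤ} {x : ℂ} {k : ℤ} (h : N * x = k) :
    Periodic (fun w => cexp (2 * π * I * N * w)) x := fun w => by
  have : 2 * π * I * N * (w + x) = 2 * π * I * N * w + k * (2 * π * I) := by
    linear_combination 2 * π * I * h
  simp only [this, exp_add, exp_int_mul_two_pi_mul_I, mul_one]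

theorem cexp_two_pi_I_mul_ne_const {N : ℤ} (hN : N ≠ 0) (c : ℂ) :
    (fun w => cexp (2 * π * I * N * w)) ≠ fun _ => c := by
  intro h
  have h0 := congrFun h 0
  have h1 := congrFun h (1 / (2 * N))
  simp only [mul_zero, Complex.exp_zero] at h0
  have : (2 * π * I * N * (1 / (2 * N)) : ℂ) = π * I := by field_simp
  rw [this, exp_pi_mul_I, ← h0] at h1
  norm_num at h1

/-- Let `X = ℂ²/Γ` with `Γ` generated by `(0,1)`, `(1,p)`, `(τ,q)`, `τ` in the
upper half plane, `p, q ∈ ℝ`. Then `X` is a toroidal group — every holomorphic function on `X`,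
i.e. every entire `Γ`-periodic function on `ℂ²`, is constant — if and only if `p` or `q` is
irrational. -/
theorem stmt10 (p q : ℝ) (τ : ℂ) (hτ : 0 < τ.im) :
    (∀ f : ℂ × ℂ → ℂ, Differentiable ℂ f →
        (∀ z w : ℂ, f (z, w + 1) = f (z, w)) →
        (∀ z w : ℂ, f (z + 1, w + p) = f (z, w)) →
        (∀ z w : ℂ, f (z + τ, w + q) = f (z, w)) →
        ∃ c : ℂ, f = fun _ => c) ↔
      (Irrational p ∨ Irrational q) := by
  constructor
  · intro H
    by_contra hpq
    rw [not_or] at hpq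
    obtain ⟨N, hN, ⟨k, hk⟩, ⟨l, hl⟩⟩ := exists_int_mul_eq_int_of_not_irrational hpq.1 hpq.2
    obtain ⟨c, hc⟩ := H (fun x => cexp (2 * π * I * N * x.2)) (by fun_prop)
      (fun _ => periodic_cexp_two_pi_I_mul (k := N) (by simp))
      (fun _ => periodic_cexp_two_pi_I_mul (k := k) (by exact_mod_cast hk))
      (fun _ => periodic_cexp_two_pi_I_mul (k := l) (by exact_mod_cast hl))
    exact cexp_two_pi_I_mul_ne_const hN c (funext fun w => congrFun hc (0, w))
  · intro hpq f hf h₀ h₁ h₂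
    let L : PeriodPair := ⟨1, τ, linearIndependent_one_of_im_ne_zero hτ.ne'⟩
    exact L.eq_const_of_periodic_of_irrational hf h₀ h₁ h₂ hpq
end
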